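/- arXiv:0910.4916 — 7 statements merged into one kernel-verified Lean document; each statement's English description precedes it below -/
import Mathlib

section
/- Let k ≥ 1 and let v : ℝ → ℝ be infinitely differentiable. Then for every l ∈ ℕ and every y ∈ ℝ, the l-th derivative of Bv satisfies the commutator identity D^l(Bv)(y) = B(D^l v)(y) + (l/(2k+1))·(D^l v)(y); that is, the operator D^l applied to B equals B applied to D^l plus l/(2k+1) times D^l. -/
section aux

variable {v : ℝ → ℝ}

lemma diff_iter (hv : ContDiff ℝ (⊤ : ℕ∞) v) (m : ℕ) : Differentiable ℝ (iteratedDeriv m v) := by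
  rw [iteratedDeriv_eq_iterate]
  exact (ContDiff.iterate_deriv m (hv.of_le (by simp))).differentiable (by simp)

lemma iter_iter (f : ℝ → ℝ) (m l : ℕ) :
    iteratedDeriv m (iteratedDeriv l f) = iteratedDeriv (m + l) f := by
  simp [iteratedDeriv_eq_iterate, ← Function.iterate_add_apply]

end aux

/-- Commutator identity `D^l (B v) = B (D^l v) + (l/(2k+1)) D^l v` for
the operator `(B v)(y) = (-1)^(k+1) v^(2k+1)(y) + (1/(2k+1)) y v'(y) + (1/(2k+1)) v(y)`. -/
theorem stmt0 (k : ℕ) (hk : 1 ≤ k) (v : ℝ → ℝ) (hv : ContDiff ℝ (⊤ : ℕ∞) v) :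
    ∀ (l : ℕ) (y : ℝ),
      iteratedDeriv l
        (fun z : ℝ =>
          (-1 : ℝ) ^ (k + 1) * iteratedDeriv (2 * k + 1) v z
            + (1 / (2 * (k : ℝ) + 1)) * z * deriv v z
            + (1 / (2 * (k : ℝ) + 1)) * v z) y
      = ((-1 : ℝ) ^ (k + 1) * iteratedDeriv (2 * k + 1) (iteratedDeriv l v) y
          + (1 / (2 * (k : ℝ) + 1)) * y * deriv (iteratedDeriv l v) y
          + (1 / (2 * (k : ℝ) + 1)) * iteratedDeriv l v y)
        + ((l : ℝ) / (2 * (k : ℝ) + 1)) * iteratedDeriv l v y := by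
  intro l
  induction l with
  | zero =>
      intro y
      simp [iteratedDeriv_zero]
  | succ l ih =>
      intro y
      have hfun : iteratedDeriv l
          (fun z : ℝ =>
            (-1 : ℝ) ^ (k + 1) * iteratedDeriv (2 * k + 1) v z
              + (1 / (2 * (k : ℝ) + 1)) * z * deriv v z
              + (1 / (2 * (k : ℝ) + 1)) * v z)
          = fun y : ℝ =>
            ((-1 : ℝ) ^ (k + 1) * iteratedDeriv (2 * k + 1) (iteratedDeriv l v) y
              + (1 / (2 * (k : ℝ) + 1)) * y * deriv (iteratedDeriv l v) y
              + (1 / (2 * (k : ℝ) + 1)) * iteratedDeriv l v y)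
            + ((l : ℝ) / (2 * (k : ℝ) + 1)) * iteratedDeriv l v y := funext ih
      rw [iteratedDeriv_succ, hfun]
      have hDl : deriv (iteratedDeriv l v) = iteratedDeriv (l + 1) v :=
        (iteratedDeriv_succ).symm
      -- differentiability facts
      have d1 : DifferentiableAt ℝ (iteratedDeriv (2 * k + 1) (iteratedDeriv l v)) y := by
        rw [iter_iter]
        exact (diff_iter hv _) y
      have d2 : DifferentiableAt ℝ (deriv (iteratedDeriv l v)) y := by
        rw [hDl]; exact (diff_iter hv _) y
      have d3 : DifferentiableAt ℝ (iteratedDeriv l v) y := (diff_iter hv _) y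
      have key : deriv (iteratedDeriv (2 * k + 1) (iteratedDeriv l v)) y
          = iteratedDeriv (2 * k + 1) (iteratedDeriv (l + 1) v) y := by
        rw [← iteratedDeriv_succ, iteratedDeriv_succ', hDl]
      have key2 : deriv (deriv (iteratedDeriv l v)) y
          = deriv (iteratedDeriv (l + 1) v) y := by rw [hDl]
      have H : HasDerivAt
          (fun y : ℝ =>
            ((-1 : ℝ) ^ (k + 1) * iteratedDeriv (2 * k + 1) (iteratedDeriv l v) y
              + (1 / (2 * (k : ℝ) + 1)) * y * deriv (iteratedDeriv l v) y
              + (1 / (2 * (k : ℝ) + 1)) * iteratedDeriv l v y)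
            + ((l : ℝ) / (2 * (k : ℝ) + 1)) * iteratedDeriv l v y)
          ((((-1 : ℝ) ^ (k + 1) * deriv (iteratedDeriv (2 * k + 1) (iteratedDeriv l v)) y)
              + (((1 / (2 * (k : ℝ) + 1)) * 1) * deriv (iteratedDeriv l v) y
                  + ((1 / (2 * (k : ℝ) + 1)) * y) * deriv (deriv (iteratedDeriv l v)) y)
              + (1 / (2 * (k : ℝ) + 1)) * deriv (iteratedDeriv l v) y)
            + ((l : ℝ) / (2 * (k : ℝ) + 1)) * deriv (iteratedDeriv l v) y) y := by
        exact (((d1.hasDerivAt.const_mul _).add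
            (((hasDerivAt_id' (x := y)).const_mul ((1 : ℝ) / (2 * (k : ℝ) + 1))).mul
                d2.hasDerivAt)).add
            (d3.hasDerivAt.const_mul _)).add (d3.hasDerivAt.const_mul _)
      rw [H.deriv, key, key2, hDl]
      push_cast
      ring
end

section
/- Let k ≥ 1 and let F : ℝ → ℝ be infinitely differentiable and satisfy BF = 0 on ℝ, i.e. (−1)^{k+1}·F^{(2k+1)}(y) + (1/(2k+1))·y·F′(y) + (1/(2k+1))·F(y) = 0 for all y ∈ ℝ. Then for every l ∈ ℕ the function ψ_l(y) := ((−1)^l/√(l!))·F^{(l)}(y) is an eigenfunction of B with eigenvalue λ_l = −l/(2k+1): for all y ∈ ℝ, (−1)^{k+1}·ψ_l^{(2k+1)}(y) + (1/(2k+1))·y·ψ_l′(y) + (1/(2k+1))·ψ_l(y) = −(l/(2k+1))·ψ_l(y). -/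
private lemma iteratedDeriv_add_aux (F : ℝ → ℝ) (l m : ℕ) :
    iteratedDeriv m (iteratedDeriv l F) = iteratedDeriv (l + m) F := by
  induction m with
  | zero => simp [iteratedDeriv_zero]
  | succ m ih =>
    rw [iteratedDeriv_succ, ih, ← iteratedDeriv_succ, Nat.add_assoc]

private lemma hasDerivAt_iteratedDeriv (F : ℝ → ℝ) (hF : ContDiff ℝ ((⊤:ℕ∞) : WithTop ℕ∞) F) (n : ℕ) (y : ℝ) :
    HasDerivAt (iteratedDeriv n F) (iteratedDeriv (n + 1) F y) y := by
  have h := (hF.differentiable_iteratedDeriv n (by exact_mod_cast (by simp : ((n:ℕ∞)) < ⊤))).differentiableAt (x := y) |>.hasDerivAt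
  rwa [iteratedDeriv_succ]

private lemma iter_const_mul (c : ℝ) (g : ℝ → ℝ) (hg : ContDiff ℝ ((⊤:ℕ∞) : WithTop ℕ∞) g) (n : ℕ) :
    iteratedDeriv n (fun y => c * g y) = fun y => c * iteratedDeriv n g y := by
  induction n with
  | zero => simp [iteratedDeriv_zero]
  | succ n ih =>
    rw [iteratedDeriv_succ, ih, iteratedDeriv_succ]
    funext x
    exact deriv_const_mul c ((hg.differentiable_iteratedDeriv n
      (by exact_mod_cast (by simp : ((n:ℕ∞)) < ⊤))).differentiableAt)

private lemma key_ode (k : ℕ) (F : ℝ → ℝ) (hF : ContDiff ℝ (⊤ : ℕ∞) F)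
    (hODE : ∀ y : ℝ,
      (-1 : ℝ) ^ (k + 1) * iteratedDeriv (2 * k + 1) F y
        + (1 / (2 * (k : ℝ) + 1)) * y * deriv F y
        + (1 / (2 * (k : ℝ) + 1)) * F y = 0) (l : ℕ) :
    ∀ y : ℝ,
      (-1 : ℝ) ^ (k + 1) * iteratedDeriv (2 * k + 1 + l) F y
        + (1 / (2 * (k : ℝ) + 1)) * (y * iteratedDeriv (l + 1) F y)
        + ((1 + (l : ℝ)) / (2 * (k : ℝ) + 1)) * iteratedDeriv l F y = 0 := by
  induction l with
  | zero =>
    intro y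
    have h := hODE y
    rw [← iteratedDeriv_one] at h
    simp only [iteratedDeriv_zero, Nat.add_zero, Nat.zero_add, Nat.cast_zero]
    linarith [h]
  | succ l ih =>
    intro y
    set a : ℝ := (-1 : ℝ) ^ (k + 1)
    set b : ℝ := 1 / (2 * (k : ℝ) + 1)
    set c : ℝ := (1 + (l : ℝ)) / (2 * (k : ℝ) + 1)
    have hd := hasDerivAt_iteratedDeriv F (hF.of_le (by simp))
    have H : HasDerivAt
        (fun y : ℝ => a * iteratedDeriv (2 * k + 1 + l) F y
          + b * (y * iteratedDeriv (l + 1) F y) + c * iteratedDeriv l F y)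
        (a * iteratedDeriv (2 * k + 1 + l + 1) F y
          + b * (1 * iteratedDeriv (l + 1) F y + y * iteratedDeriv (l + 1 + 1) F y)
          + c * iteratedDeriv (l + 1) F y) y :=
      ((((hd _ y).const_mul a).add
        ((((hasDerivAt_id y).mul (hd (l + 1) y)).const_mul b))).add
        ((hd l y).const_mul c))
    have hfun : (fun y : ℝ => a * iteratedDeriv (2 * k + 1 + l) F y
          + b * (y * iteratedDeriv (l + 1) F y) + c * iteratedDeriv l F y)
        = fun _ : ℝ => (0 : ℝ) := funext ih
    rw [hfun] at H
    have hzero := H.unique (hasDerivAt_const y 0)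
    have hidx : 2 * k + 1 + (l + 1) = 2 * k + 1 + l + 1 := by ring
    rw [hidx]
    have hbc : (1 + ((l : ℝ) + 1)) / (2 * (k : ℝ) + 1) = b + c := by
      simp only [b, c]; ring
    push_cast
    rw [hbc]
    linarith [hzero]

/-- If `B F = 0` then `ψ_l(y) = ((-1)^l/√(l!)) F^(l)(y)` is an eigenfunction of
`B` with eigenvalue `-l/(2k+1)`. -/
theorem stmt1 (k : ℕ) (hk : 1 ≤ k) (F : ℝ → ℝ) (hF : ContDiff ℝ (⊤ : ℕ∞) F)
    (hODE : ∀ y : ℝ,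
      (-1 : ℝ) ^ (k + 1) * iteratedDeriv (2 * k + 1) F y
        + (1 / (2 * (k : ℝ) + 1)) * y * deriv F y
        + (1 / (2 * (k : ℝ) + 1)) * F y = 0) :
    ∀ (l : ℕ) (ψ : ℝ → ℝ),
      (∀ y : ℝ, ψ y = ((-1 : ℝ) ^ l / Real.sqrt (Nat.factorial l)) * iteratedDeriv l F y) →
      ∀ y : ℝ,
        (-1 : ℝ) ^ (k + 1) * iteratedDeriv (2 * k + 1) ψ y
          + (1 / (2 * (k : ℝ) + 1)) * y * deriv ψ y
          + (1 / (2 * (k : ℝ) + 1)) * ψ y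
        = -((l : ℝ) / (2 * (k : ℝ) + 1)) * ψ y := by
  intro l ψ hψ y
  set c : ℝ := (-1 : ℝ) ^ l / Real.sqrt (Nat.factorial l)
  have hψfun : ψ = fun y => c * iteratedDeriv l F y := funext hψ
  have hcd : ContDiff ℝ ((⊤:ℕ∞) : WithTop ℕ∞) (iteratedDeriv l F) := by
    rw [iteratedDeriv_eq_iterate]
    exact ContDiff.iterate_deriv l (hF.of_le (by simp))
  have hiter : ∀ n : ℕ, iteratedDeriv n ψ = fun y => c * iteratedDeriv (l + n) F y := by
    intro n
    rw [hψfun, iter_const_mul c _ hcd n, iteratedDeriv_add_aux]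
  have h1 : iteratedDeriv (2 * k + 1) ψ y = c * iteratedDeriv (l + (2 * k + 1)) F y := by
    rw [hiter]
  have h2 : deriv ψ y = c * iteratedDeriv (l + 1) F y := by
    rw [← iteratedDeriv_one, hiter]
  rw [h1, h2, hψ y]
  have hkey := key_ode k F hF hODE l y
  have hidx : l + (2 * k + 1) = 2 * k + 1 + l := by ring
  rw [hidx]
  simp only [c]
  linear_combination c * hkey
end

section
/- Let k ≥ 1 and set α = (2k+1)/(2k). There exists a₀ > 0 (depending on k) such that for every a ∈ (0, a₀) there is a constant C > 0 (depending on k and a) with the following property: for every infinitely differentiable compactly supported function v : ℝ → ℝ, ∫_ℝ ρ(y)·|(−1)^{k+1}·v^{(2k+1)}(y) + (1/(2k+1))·y·v′(y) + (1/(2k+1))·v(y)|² dy ≤ C·∑_{r=0}^{2k+1} ∫_ℝ ρ(y)·|v^{(r)}(y)|² dy, where ρ(y) = exp(−a·y·|y|^{α−1}) (so that ρ(y) = e^{a|y|^α} for y ≤ 0 and ρ(y) = e^{−a y^α} for y ≥ 0). In other words, B is a bounded linear operator from H^{2k+1}_ρ(ℝ) to L²_ρ(ℝ). -/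
open MeasureTheory Real Filter

noncomputable def rhoW (a c y : ℝ) : ℝ := Real.exp (-a * y * |y| ^ c)

noncomputable def Wt (θ y : ℝ) : ℝ := (1 + y ^ 2) ^ (θ / 2)

lemma one_add_sq_pos (y : ℝ) : (0:ℝ) < 1 + y ^ 2 := by positivity

lemma hasDerivAt_phi {c : ℝ} (hc : 0 < c) (y : ℝ) :
    HasDerivAt (fun x : ℝ => x * |x| ^ c) ((1 + c) * |y| ^ c) y := by
  rcases lt_trichotomy y 0 with hy | hy | hy
  · have h1 : HasDerivAt (fun x : ℝ => -x) (-1) y := (hasDerivAt_id y).neg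
    have h2 : HasDerivAt (fun x : ℝ => (-x) ^ c) (-1 * c * (-y) ^ (c - 1)) y :=
      h1.rpow_const (Or.inl (by intro h; linarith [neg_eq_zero.mp h]))
    have h3 : HasDerivAt (fun x : ℝ => x * (-x) ^ c)
        (1 * (-y) ^ c + y * (-1 * c * (-y) ^ (c - 1))) y :=
      (hasDerivAt_id y).mul h2
    have key : y * (-1 * c * (-y) ^ (c - 1)) = c * (-y) ^ c := by
      have : (-y) ^ c = (-y) ^ (c - 1) * (-y) := by
        rw [← Real.rpow_add_one (by linarith : (-y) ≠ 0)]; ring_nf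
      rw [this]; ring
    have h4 : HasDerivAt (fun x : ℝ => x * (-x) ^ c) ((1 + c) * (-y) ^ c) y := by
      convert h3 using 1; rw [key]; ring
    have habs : |y| = -y := abs_of_neg hy
    have heq : (fun x : ℝ => x * |x| ^ c) =ᶠ[nhds y] (fun x : ℝ => x * (-x) ^ c) := by
      filter_upwards [eventually_lt_nhds hy] with x hx
      rw [abs_of_neg hx]
    rw [habs]
    exact h4.congr_of_eventuallyEq heq
  · subst hy
    have h0 : |(0:ℝ)| ^ c = 0 := by
      simp [Real.zero_rpow hc.ne']
    rw [h0, mul_zero]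
    rw [hasDerivAt_iff_tendsto_slope]
    have hcont : Tendsto (fun x : ℝ => |x| ^ c) (nhds 0) (nhds 0) := by
      have : ContinuousAt (fun x : ℝ => |x| ^ c) 0 := by
        have h1 : ContinuousAt (fun t : ℝ => t ^ c) |((0:ℝ))| :=
          Real.continuousAt_rpow_const _ _ (Or.inr hc.le)
        exact h1.comp continuous_abs.continuousAt
      have := this.tendsto
      simpa [Real.zero_rpow hc.ne'] using this
    have : Tendsto (fun x : ℝ => |x| ^ c) (nhdsWithin 0 {(0:ℝ)}ᶜ) (nhds 0) :=
      hcont.mono_left nhdsWithin_le_nhds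
    refine this.congr' ?_
    filter_upwards [self_mem_nhdsWithin] with x hx
    have hx0 : x ≠ 0 := hx
    simp only [slope, sub_zero, zero_mul, mul_zero, vsub_eq_sub, smul_eq_mul]
    field_simp
  · have h2 : HasDerivAt (fun x : ℝ => x ^ c) (c * y ^ (c - 1)) y :=
      Real.hasDerivAt_rpow_const (Or.inl hy.ne')
    have h3 : HasDerivAt (fun x : ℝ => x * x ^ c) (1 * y ^ c + y * (c * y ^ (c - 1))) y :=
      (hasDerivAt_id y).mul h2
    have key : y * (c * y ^ (c - 1)) = c * y ^ c := by
      have : y ^ c = y ^ (c - 1) * y := by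
        rw [← Real.rpow_add_one hy.ne']; ring_nf
      rw [this]; ring
    have h4 : HasDerivAt (fun x : ℝ => x * x ^ c) ((1 + c) * y ^ c) y := by
      convert h3 using 1; rw [key]; ring
    have habs : |y| = y := abs_of_pos hy
    have heq : (fun x : ℝ => x * |x| ^ c) =ᶠ[nhds y] (fun x : ℝ => x * x ^ c) := by
      filter_upwards [eventually_gt_nhds hy] with x hx
      rw [abs_of_pos hx]
    rw [habs]
    exact h4.congr_of_eventuallyEq heq
lemma hasDerivAt_rhoW {a c : ℝ} (hc : 0 < c) (y : ℝ) :
    HasDerivAt (rhoW a c) (-(a * (1 + c) * |y| ^ c) * rhoW a c y) y := by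
  have h1 : HasDerivAt (fun x : ℝ => -a * (x * |x| ^ c)) (-a * ((1 + c) * |y| ^ c)) y :=
    (hasDerivAt_phi hc y).const_mul (-a)
  have h2 : (fun x : ℝ => -a * x * |x| ^ c) = (fun x : ℝ => -a * (x * |x| ^ c)) := by
    funext x; ring
  have h3 : HasDerivAt (fun x : ℝ => Real.exp (-a * (x * |x| ^ c)))
      (Real.exp (-a * (y * |y| ^ c)) * (-a * ((1 + c) * |y| ^ c))) y := h1.exp
  have h4 : (fun x : ℝ => Real.exp (-a * x * |x| ^ c)) =
      (fun x : ℝ => Real.exp (-a * (x * |x| ^ c))) := by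
    funext x; rw [mul_assoc]
  unfold rhoW
  rw [h4]
  convert h3 using 1
  ring

lemma hasDerivAt_Wt (θ y : ℝ) :
    HasDerivAt (Wt θ) (θ * y * (1 + y ^ 2) ^ (θ / 2 - 1)) y := by
  have h1 : HasDerivAt (fun x : ℝ => 1 + x ^ 2) ((2:ℕ) * y ^ (2-1)) y :=
    ((hasDerivAt_pow 2 y)).const_add 1
  have h2 := h1.rpow_const (p := θ / 2) (Or.inl (one_add_sq_pos y).ne')
  unfold Wt
  convert h2 using 1
  push_cast
  ring

lemma rhoW_pos {a c : ℝ} (y : ℝ) : 0 < rhoW a c y := Real.exp_pos _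

lemma Wt_pos {θ : ℝ} (y : ℝ) : 0 < Wt θ y := Real.rpow_pos_of_pos (one_add_sq_pos y) _

lemma continuous_rhoW {a c : ℝ} (hc : 0 < c) : Continuous (rhoW a c) :=
  continuous_iff_continuousAt.2 fun y => (hasDerivAt_rhoW hc y).continuousAt

lemma continuous_Wt (θ : ℝ) : Continuous (Wt θ) :=
  continuous_iff_continuousAt.2 fun y => (hasDerivAt_Wt θ y).continuousAt

lemma continuous_absrpow {c : ℝ} (hc : 0 < c) : Continuous (fun y : ℝ => |y| ^ c) :=
  continuous_iff_continuousAt.2 fun y =>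
    (Real.continuousAt_rpow_const _ _ (Or.inr hc.le)).comp continuous_abs.continuousAt

lemma continuous_Wtaux (s : ℝ) : Continuous (fun y : ℝ => (1 + y ^ 2) ^ s) :=
  Continuous.rpow_const (by fun_prop) fun y => Or.inl (one_add_sq_pos y).ne'

lemma Wt_mul (s t y : ℝ) : Wt s y * Wt t y = Wt (s + t) y := by
  unfold Wt
  rw [← Real.rpow_add (one_add_sq_pos y)]
  ring_nf

lemma one_le_one_add_sq (y : ℝ) : (1:ℝ) ≤ 1 + y ^ 2 := by nlinarith [sq_nonneg y]

lemma Wt_mono {s t : ℝ} (h : s ≤ t) (y : ℝ) : Wt s y ≤ Wt t y :=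
  Real.rpow_le_rpow_of_exponent_le (one_le_one_add_sq y) (by linarith)

lemma Wt_zero (y : ℝ) : Wt 0 y = 1 := by
  unfold Wt; rw [zero_div, Real.rpow_zero]

lemma one_le_Wt {θ : ℝ} (hθ : 0 ≤ θ) (y : ℝ) : 1 ≤ Wt θ y := by
  rw [← Wt_zero y]; exact Wt_mono hθ y

lemma sq_abs_rpow {c : ℝ} (y : ℝ) : (y ^ 2 : ℝ) ^ (c / 2) = |y| ^ c := by
  rw [← sq_abs, ← Real.rpow_natCast |y| 2, ← Real.rpow_mul (abs_nonneg y)]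
  push_cast
  rw [show (2:ℝ) * (c/2) = c by ring]

/-- key pointwise bound: `Wt c y ≤ 2^(c/2) * (|y|^c + 1)` -/
lemma Wt_le_abs {c : ℝ} (hc : 0 < c) (y : ℝ) :
    Wt c y ≤ (2:ℝ) ^ (c / 2) * (|y| ^ c + 1) := by
  have h2 : (0:ℝ) ≤ (2:ℝ) ^ (c/2) := Real.rpow_nonneg (by norm_num) _
  have habs : (0:ℝ) ≤ |y| ^ c := Real.rpow_nonneg (abs_nonneg y) _
  rcases le_total (y ^ 2) 1 with hy | hy
  · have h1 : Wt c y ≤ (2:ℝ) ^ (c/2) := by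
      unfold Wt
      exact Real.rpow_le_rpow (by positivity) (by linarith) (by positivity)
    nlinarith
  · have h1 : Wt c y ≤ (2 * y ^ 2 : ℝ) ^ (c/2) := by
      unfold Wt
      exact Real.rpow_le_rpow (by positivity) (by linarith) (by positivity)
    have h3 : (2 * y ^ 2 : ℝ) ^ (c/2) = (2:ℝ) ^ (c/2) * |y| ^ c := by
      rw [Real.mul_rpow (by norm_num) (sq_nonneg y), sq_abs_rpow]
    nlinarith

lemma Wt_split {θ c : ℝ} (hc : 0 < c) (y : ℝ) :
    Wt (θ + c) y ≤ (2:ℝ) ^ (c / 2) * (|y| ^ c * Wt θ y) + (2:ℝ) ^ (c / 2) * Wt θ y := by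
  have h := Wt_le_abs hc y
  have hW : 0 < Wt θ y := Wt_pos y
  have : Wt (θ + c) y = Wt c y * Wt θ y := by rw [Wt_mul, add_comm]
  rw [this]
  nlinarith

/-- pointwise bound on the `Wt` derivative term -/
lemma Wt_deriv_bound {θ : ℝ} (hθ : 0 ≤ θ) (y : ℝ) :
    θ * y * (1 + y ^ 2) ^ (θ / 2 - 1) ≤ θ * Wt θ y := by
  have h1 : |y| ≤ (1 + y ^ 2) ^ ((1:ℝ)/2) := by
    have : (y ^ 2 : ℝ) ^ ((1:ℝ)/2) = |y| := by
      have := sq_abs_rpow (c := (1:ℝ)) y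
      rwa [Real.rpow_one] at this
    rw [← this]
    exact Real.rpow_le_rpow (sq_nonneg y) (by linarith) (by norm_num)
  have hp : (0:ℝ) < (1 + y ^ 2) ^ (θ / 2 - 1) := Real.rpow_pos_of_pos (one_add_sq_pos y) _
  have h2 : y * (1 + y ^ 2) ^ (θ / 2 - 1) ≤ Wt θ y := by
    calc y * (1 + y ^ 2) ^ (θ / 2 - 1) ≤ |y| * (1 + y ^ 2) ^ (θ / 2 - 1) := by
          exact mul_le_mul_of_nonneg_right (le_abs_self y) hp.le
      _ ≤ (1 + y ^ 2) ^ ((1:ℝ)/2) * (1 + y ^ 2) ^ (θ / 2 - 1) :=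
          mul_le_mul_of_nonneg_right h1 hp.le
      _ = (1 + y ^ 2) ^ ((1:ℝ)/2 + (θ / 2 - 1)) := by
          rw [← Real.rpow_add (one_add_sq_pos y)]
      _ ≤ Wt θ y := by
          unfold Wt
          exact Real.rpow_le_rpow_of_exponent_le (one_le_one_add_sq y) (by linarith)
  calc θ * y * (1 + y ^ 2) ^ (θ / 2 - 1) = θ * (y * (1 + y ^ 2) ^ (θ / 2 - 1)) := by ring
    _ ≤ θ * Wt θ y := mul_le_mul_of_nonneg_left h2 hθ

lemma young_ineq {ε : ℝ} (hε : 0 < ε) (A B : ℝ) : 2 * (A * B) ≤ ε * A ^ 2 + ε⁻¹ * B ^ 2 := by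
  have h1 : 0 ≤ (ε * A - B) ^ 2 := sq_nonneg _
  have h2 : ε * ε⁻¹ = 1 := mul_inv_cancel₀ hε.ne'
  nlinarith [sq_nonneg (ε * A - B), mul_pos hε hε]

/-- Young applied to the cross term -/
lemma young_Wt {θ c ε : ℝ} (hε : 0 < ε) (y u u' : ℝ) :
    Wt θ y * (2 * u * u') ≤ ε * (Wt (θ + c) y * u ^ 2) + ε⁻¹ * (Wt (θ - c) y * u' ^ 2) := by
  have hA := young_ineq hε (Wt ((θ + c)/2) y * u) (Wt ((θ - c)/2) y * u')
  have h1 : Wt ((θ + c)/2) y * u * (Wt ((θ - c)/2) y * u') = Wt θ y * (u * u') := by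
    have : Wt ((θ + c)/2) y * Wt ((θ - c)/2) y = Wt θ y := by
      rw [Wt_mul]; ring_nf
    linear_combination (u * u') * this
  have h2 : (Wt ((θ + c)/2) y * u) ^ 2 = Wt (θ + c) y * u ^ 2 := by
    have : Wt ((θ + c)/2) y * Wt ((θ + c)/2) y = Wt (θ + c) y := by
      rw [Wt_mul]; ring_nf
    linear_combination (u ^ 2) * this
  have h3 : (Wt ((θ - c)/2) y * u') ^ 2 = Wt (θ - c) y * u' ^ 2 := by
    have : Wt ((θ - c)/2) y * Wt ((θ - c)/2) y = Wt (θ - c) y := by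
      rw [Wt_mul]; ring_nf
    linear_combination (u' ^ 2) * this
  rw [← h2, ← h3]
  calc Wt θ y * (2 * u * u') = 2 * (Wt ((θ + c)/2) y * u * (Wt ((θ - c)/2) y * u')) := by
        rw [h1]; ring
    _ ≤ _ := hA

lemma hcs_sq {w : ℝ → ℝ} (hw : HasCompactSupport w) :
    HasCompactSupport (fun y => w y ^ 2) := by
  have : (fun y => w y ^ 2) = w * w := by funext y; simp [pow_two]
  rw [this]; exact hw.mul_right

lemma hcs_two_mul_deriv {w : ℝ → ℝ} (hw : HasCompactSupport w) :
    HasCompactSupport (fun y => 2 * w y * deriv w y) :=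
  HasCompactSupport.mul_left (f := fun y => 2 * w y) hw.deriv

lemma integrable_cont_mul {g u : ℝ → ℝ} (hg : Continuous g) (hu : Continuous u)
    (hcs : HasCompactSupport u) : Integrable (fun y => g y * u y) :=
  (hg.mul hu).integrable_of_hasCompactSupport hcs.mul_left

lemma contDiff_deriv {w : ℝ → ℝ} (hw : ContDiff ℝ (⊤ : ℕ∞) w) :
    ContDiff ℝ (⊤ : ℕ∞) (deriv w) :=
  (contDiff_infty_iff_deriv.1 hw).2

lemma cont_deriv {w : ℝ → ℝ} (hw : ContDiff ℝ (⊤ : ℕ∞) w) : Continuous (deriv w) :=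
  (contDiff_deriv hw).continuous

/-- Integration by parts identity. -/
lemma ibp {a c : ℝ} (hc : 0 < c) (θ : ℝ) {w : ℝ → ℝ}
    (hw : ContDiff ℝ (⊤ : ℕ∞) w) (hcs : HasCompactSupport w) :
    ∫ y : ℝ, a * (1 + c) * |y| ^ c * rhoW a c y * Wt θ y * w y ^ 2
      = (∫ y : ℝ, rhoW a c y * (θ * y * (1 + y ^ 2) ^ (θ / 2 - 1)) * w y ^ 2)
        + ∫ y : ℝ, rhoW a c y * Wt θ y * (2 * w y * deriv w y) := by
  have hwc : Continuous w := hw.continuous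
  have hdwc : Continuous (deriv w) := cont_deriv hw
  have hρ : Continuous (rhoW a c) := continuous_rhoW hc
  have hab : Continuous (fun y : ℝ => |y| ^ c) := continuous_absrpow hc
  set G₁ : ℝ → ℝ := fun y => -(a * (1 + c) * |y| ^ c * rhoW a c y * Wt θ y * w y ^ 2) with hG₁
  set G₂ : ℝ → ℝ := fun y => rhoW a c y * (θ * y * (1 + y ^ 2) ^ (θ / 2 - 1)) * w y ^ 2 with hG₂
  set G₃ : ℝ → ℝ := fun y => rhoW a c y * Wt θ y * (2 * w y * deriv w y) with hG₃
  have hiG₁' : Integrable (fun y : ℝ => a * (1 + c) * |y| ^ c * rhoW a c y * Wt θ y * w y ^ 2) :=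
    integrable_cont_mul (((continuous_const.mul hab).mul hρ).mul (continuous_Wt θ))
      (hwc.pow 2) (hcs_sq hcs)
  have hiG₁ : Integrable G₁ := hiG₁'.neg
  have hiG₂ : Integrable G₂ :=
    integrable_cont_mul (hρ.mul ((continuous_const.mul continuous_id).mul
      (continuous_Wtaux (θ / 2 - 1)))) (hwc.pow 2) (hcs_sq hcs)
  have hiG₃ : Integrable G₃ :=
    integrable_cont_mul (hρ.mul (continuous_Wt θ))
      ((continuous_const.mul hwc).mul hdwc) (hcs_two_mul_deriv hcs)
  have hderiv : ∀ y : ℝ, HasDerivAt (fun y => rhoW a c y * (Wt θ y * w y ^ 2))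
      (G₁ y + G₂ y + G₃ y) y := by
    intro y
    have hdw : HasDerivAt w (deriv w y) y :=
      ((hw.differentiable (by simp)) y).hasDerivAt
    have hsq : HasDerivAt (fun y => w y ^ 2) ((2:ℕ) * w y ^ (2-1) * deriv w y) y := hdw.pow 2
    have hin : HasDerivAt (fun y => Wt θ y * w y ^ 2)
        ((θ * y * (1 + y ^ 2) ^ (θ / 2 - 1)) * w y ^ 2
          + Wt θ y * ((2:ℕ) * w y ^ (2-1) * deriv w y)) y :=
      (hasDerivAt_Wt θ y).mul hsq
    have hfull := (hasDerivAt_rhoW (a := a) hc y).mul hin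
    refine hfull.congr_deriv ?_
    simp only [hG₁, hG₂, hG₃]
    push_cast
    ring
  have hF : Integrable (fun y : ℝ => rhoW a c y * (Wt θ y * w y ^ 2)) :=
    integrable_cont_mul hρ ((continuous_Wt θ).mul (hwc.pow 2))
      (HasCompactSupport.mul_left (f := Wt θ) (hcs_sq hcs))
  have hzero : ∫ y : ℝ, (G₁ y + G₂ y + G₃ y) = 0 :=
    integral_eq_zero_of_hasDerivAt_of_integrable hderiv ((hiG₁.add hiG₂).add hiG₃) hF
  have hsplit : ∫ y : ℝ, (G₁ y + G₂ y + G₃ y)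
      = (∫ y : ℝ, G₁ y) + (∫ y : ℝ, G₂ y) + ∫ y : ℝ, G₃ y := by
    rw [integral_add (by exact hiG₁.add hiG₂) hiG₃,
      integral_add hiG₁ hiG₂]
  rw [hsplit] at hzero
  have hneg : ∫ y : ℝ, G₁ y
      = -∫ y : ℝ, a * (1 + c) * |y| ^ c * rhoW a c y * Wt θ y * w y ^ 2 := by
    simp only [hG₁, integral_neg]
  rw [hneg] at hzero
  change _ = (∫ y : ℝ, G₂ y) + ∫ y : ℝ, G₃ y
  linarith

set_option maxHeartbeats 1000000 in
/-- The key one-step weighted inequality. -/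
lemma step {a c : ℝ} (hc : 0 < c) (ha : 0 < a) {θ : ℝ} (hθ : 0 ≤ θ) :
    ∃ C > (0:ℝ), ∀ w : ℝ → ℝ, ContDiff ℝ (⊤ : ℕ∞) w → HasCompactSupport w →
      (∫ y : ℝ, rhoW a c y * Wt (θ + c) y * w y ^ 2)
        ≤ C * ((∫ y : ℝ, rhoW a c y * Wt θ y * w y ^ 2)
          + ∫ y : ℝ, rhoW a c y * Wt (θ - c) y * deriv w y ^ 2) := by
  set A := a * (1 + c) with hA
  have hApos : 0 < A := by positivity
  set β := (2:ℝ) ^ (c / 2) with hβ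
  have hβpos : 0 < β := Real.rpow_pos_of_pos (by norm_num) _
  set ε := A / (2 * β) with hε
  have hεpos : 0 < ε := by positivity
  refine ⟨2 * (β * θ / A + β) + 4 * β ^ 2 / A ^ 2, by positivity, ?_⟩
  intro w hw hcs
  have hwc : Continuous w := hw.continuous
  have hdwc : Continuous (deriv w) := cont_deriv hw
  have hρ : Continuous (rhoW a c) := continuous_rhoW hc
  have hab : Continuous (fun y : ℝ => |y| ^ c) := continuous_absrpow hc
  set I := ∫ y : ℝ, rhoW a c y * Wt (θ + c) y * w y ^ 2 with hI
  set J := ∫ y : ℝ, rhoW a c y * Wt θ y * w y ^ 2 with hJ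
  set K := ∫ y : ℝ, rhoW a c y * Wt (θ - c) y * deriv w y ^ 2 with hK
  set Q := ∫ y : ℝ, |y| ^ c * rhoW a c y * Wt θ y * w y ^ 2 with hQ
  have iI : Integrable (fun y : ℝ => rhoW a c y * Wt (θ + c) y * w y ^ 2) :=
    integrable_cont_mul (hρ.mul (continuous_Wt _)) (hwc.pow 2) (hcs_sq hcs)
  have iJ : Integrable (fun y : ℝ => rhoW a c y * Wt θ y * w y ^ 2) :=
    integrable_cont_mul (hρ.mul (continuous_Wt _)) (hwc.pow 2) (hcs_sq hcs)
  have iK : Integrable (fun y : ℝ => rhoW a c y * Wt (θ - c) y * deriv w y ^ 2) :=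
    integrable_cont_mul (hρ.mul (continuous_Wt _)) (hdwc.pow 2) (hcs_sq hcs.deriv)
  have iQ : Integrable (fun y : ℝ => |y| ^ c * rhoW a c y * Wt θ y * w y ^ 2) :=
    integrable_cont_mul ((hab.mul hρ).mul (continuous_Wt _)) (hwc.pow 2) (hcs_sq hcs)
  -- E₂ and E₃, the two RHS integrals in ibp
  set E₂ := ∫ y : ℝ, rhoW a c y * (θ * y * (1 + y ^ 2) ^ (θ / 2 - 1)) * w y ^ 2 with hE₂
  set E₃ := ∫ y : ℝ, rhoW a c y * Wt θ y * (2 * w y * deriv w y) with hE₃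
  have iE₂ : Integrable (fun y : ℝ =>
      rhoW a c y * (θ * y * (1 + y ^ 2) ^ (θ / 2 - 1)) * w y ^ 2) :=
    integrable_cont_mul (hρ.mul ((continuous_const.mul continuous_id).mul
      (continuous_Wtaux (θ / 2 - 1)))) (hwc.pow 2) (hcs_sq hcs)
  have iE₃ : Integrable (fun y : ℝ => rhoW a c y * Wt θ y * (2 * w y * deriv w y)) :=
    integrable_cont_mul (hρ.mul (continuous_Wt θ))
      ((continuous_const.mul hwc).mul hdwc) (hcs_two_mul_deriv hcs)
  -- from ibp : A * Q = E₂ + E₃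
  have hibp : A * Q = E₂ + E₃ := by
    have h0 := ibp (a := a) hc θ hw hcs
    have h1 : (fun y : ℝ => a * (1 + c) * |y| ^ c * rhoW a c y * Wt θ y * w y ^ 2)
        = fun y : ℝ => A * (|y| ^ c * rhoW a c y * Wt θ y * w y ^ 2) := by
      funext y; rw [hA]; ring
    rw [h1] at h0
    rw [integral_const_mul] at h0
    exact h0
  -- I ≤ β * Q + β * J
  have hIQ : I ≤ β * Q + β * J := by
    have hpt : ∀ y : ℝ, rhoW a c y * Wt (θ + c) y * w y ^ 2
        ≤ β * (|y| ^ c * rhoW a c y * Wt θ y * w y ^ 2)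
          + β * (rhoW a c y * Wt θ y * w y ^ 2) := by
      intro y
      have h := Wt_split (θ := θ) hc y
      have hm := mul_le_mul_of_nonneg_left h
        (mul_nonneg (rhoW_pos (a := a) (c := c) y).le (sq_nonneg (w y)))
      nlinarith [hm]
    have hmono := integral_mono iI (((iQ.const_mul β).add (iJ.const_mul β) :
        Integrable fun y : ℝ => β * (|y| ^ c * rhoW a c y * Wt θ y * w y ^ 2)
          + β * (rhoW a c y * Wt θ y * w y ^ 2))) hpt
    rwa [integral_add (iQ.const_mul β) (iJ.const_mul β),
      integral_const_mul, integral_const_mul] at hmono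
  -- E₂ ≤ θ * J
  have hE2J : E₂ ≤ θ * J := by
    have hpt : ∀ y : ℝ, rhoW a c y * (θ * y * (1 + y ^ 2) ^ (θ / 2 - 1)) * w y ^ 2
        ≤ θ * (rhoW a c y * Wt θ y * w y ^ 2) := by
      intro y
      have h := Wt_deriv_bound (θ := θ) hθ y
      have hm := mul_le_mul_of_nonneg_left h
        (mul_nonneg (rhoW_pos (a := a) (c := c) y).le (sq_nonneg (w y)))
      nlinarith [hm]
    have hmono := integral_mono iE₂ ((iJ.const_mul θ :
        Integrable fun y : ℝ => θ * (rhoW a c y * Wt θ y * w y ^ 2))) hpt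
    rwa [integral_const_mul] at hmono
  -- E₃ ≤ ε * I + ε⁻¹ * K
  have hE3 : E₃ ≤ ε * I + ε⁻¹ * K := by
    have hpt : ∀ y : ℝ, rhoW a c y * Wt θ y * (2 * w y * deriv w y)
        ≤ ε * (rhoW a c y * Wt (θ + c) y * w y ^ 2)
          + ε⁻¹ * (rhoW a c y * Wt (θ - c) y * deriv w y ^ 2) := by
      intro y
      have h := young_Wt (θ := θ) (c := c) hεpos y (w y) (deriv w y)
      have hm := mul_le_mul_of_nonneg_left h (rhoW_pos (a := a) (c := c) y).le
      nlinarith [hm]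
    have hmono := integral_mono iE₃ (((iI.const_mul ε).add (iK.const_mul ε⁻¹) :
        Integrable fun y : ℝ => ε * (rhoW a c y * Wt (θ + c) y * w y ^ 2)
          + ε⁻¹ * (rhoW a c y * Wt (θ - c) y * deriv w y ^ 2))) hpt
    rwa [integral_add (iI.const_mul ε) (iK.const_mul ε⁻¹),
      integral_const_mul, integral_const_mul] at hmono
  -- nonnegativity
  have hJ0 : 0 ≤ J := integral_nonneg fun y =>
    mul_nonneg (mul_nonneg (rhoW_pos y).le (Wt_pos y).le) (sq_nonneg _)
  have hK0 : 0 ≤ K := integral_nonneg fun y =>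
    mul_nonneg (mul_nonneg (rhoW_pos y).le (Wt_pos y).le) (sq_nonneg _)
  -- combine
  have hβA : β / A * ε = 1 / 2 := by
    rw [hε]; field_simp
  have hQval : Q = (E₂ + E₃) / A := by
    field_simp at hibp ⊢; linarith [hibp]
  have hfinal : I ≤ (β * θ / A + β) * J + I / 2 + (β / A * ε⁻¹) * K := by
    have h1 : I ≤ β * ((E₂ + E₃) / A) + β * J := by rw [← hQval]; exact hIQ
    have h2 : β * ((E₂ + E₃) / A) ≤ β / A * (θ * J) + β / A * (ε * I + ε⁻¹ * K) := by
      have hE := add_le_add hE2J hE3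
      have := mul_le_mul_of_nonneg_left hE (le_of_lt (by positivity : (0:ℝ) < β / A))
      calc β * ((E₂ + E₃) / A) = β / A * (E₂ + E₃) := by ring
        _ ≤ β / A * (θ * J + (ε * I + ε⁻¹ * K)) := this
        _ = β / A * (θ * J) + β / A * (ε * I + ε⁻¹ * K) := by ring
    have h3 : β / A * (ε * I) = I / 2 := by
      calc β / A * (ε * I) = (β / A * ε) * I := by ring
        _ = I / 2 := by rw [hβA]; ring
    calc I ≤ β * ((E₂ + E₃) / A) + β * J := h1
      _ ≤ (β / A * (θ * J) + β / A * (ε * I + ε⁻¹ * K)) + β * J := by linarith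
      _ = (β * θ / A + β) * J + β / A * (ε * I) + (β / A * ε⁻¹) * K := by ring
      _ = (β * θ / A + β) * J + I / 2 + (β / A * ε⁻¹) * K := by rw [h3]
  have hεinv : β / A * ε⁻¹ = 2 * β ^ 2 / A ^ 2 := by
    rw [hε]; field_simp
  rw [hεinv] at hfinal
  set C₁ := 2 * (β * θ / A + β) with hC₁def
  set C₂ := 4 * β ^ 2 / A ^ 2 with hC₂def
  have hC1 : (0:ℝ) ≤ C₁ := by rw [hC₁def]; positivity
  have hC2 : (0:ℝ) ≤ C₂ := by rw [hC₂def]; positivity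
  have e1 : C₁ / 2 = β * θ / A + β := by rw [hC₁def]; ring
  have e2 : C₂ / 2 = 2 * β ^ 2 / A ^ 2 := by rw [hC₂def]; ring
  have hf2 : I ≤ C₁ / 2 * J + I / 2 + C₂ / 2 * K := by
    rw [e1, e2]; exact hfinal
  clear_value C₁ C₂
  nlinarith [mul_nonneg hC1 hK0, mul_nonneg hC2 hJ0, hf2]

set_option maxHeartbeats 1000000 in
/-- Iterated weighted inequality. -/
lemma chain {a c : ℝ} (hc : 0 < c) (ha : 0 < a) (n : ℕ) :
    ∃ C > (0:ℝ), ∀ w : ℝ → ℝ, ContDiff ℝ (⊤ : ℕ∞) w → HasCompactSupport w →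
      (∫ y : ℝ, rhoW a c y * Wt ((n:ℝ) * c) y * w y ^ 2)
        ≤ C * ∑ r ∈ Finset.range ((n + 1) / 2 + 1),
            ∫ y : ℝ, rhoW a c y * iteratedDeriv r w y ^ 2 := by
  induction n using Nat.strong_induction_on with
  | _ n IH =>
  match n with
  | 0 =>
    refine ⟨1, one_pos, ?_⟩
    intro w hw hcs
    simp [Wt_zero, iteratedDeriv_zero, Finset.sum_range_one]
  | (m + 1) =>
    have hθ : (0:ℝ) ≤ (m:ℝ) * c := mul_nonneg (Nat.cast_nonneg m) hc.le
    obtain ⟨C₀, hC₀, hstep⟩ := step (θ := (m:ℝ) * c) hc ha hθ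
    obtain ⟨C₁, hC₁, hind1⟩ := IH m (by omega)
    obtain ⟨C₂, hC₂, hind2⟩ := IH (m - 1) (by omega)
    set M₁ : ℕ := (m + 1) / 2 + 1 with hM₁
    set M₂ : ℕ := (m - 1 + 1) / 2 + 1 with hM₂
    have hM₁pos : (0:ℝ) < (M₁ : ℝ) := by exact_mod_cast (by omega : 0 < M₁)
    have hM₂pos : (0:ℝ) < (M₂ : ℝ) := by exact_mod_cast (by omega : 0 < M₂)
    refine ⟨C₀ * (C₁ * M₁ + C₂ * M₂),
      mul_pos hC₀ (add_pos (mul_pos hC₁ hM₁pos) (mul_pos hC₂ hM₂pos)), ?_⟩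
    intro w hw hcs
    have hwc : Continuous w := hw.continuous
    have hdwc : Continuous (deriv w) := cont_deriv hw
    have hρ : Continuous (rhoW a c) := continuous_rhoW hc
    have hTnn : ∀ r : ℕ, 0 ≤ ∫ y : ℝ, rhoW a c y * iteratedDeriv r w y ^ 2 :=
      fun r => integral_nonneg fun y => mul_nonneg (rhoW_pos y).le (sq_nonneg _)
    have h1 := hstep w hw hcs
    have h2 := hind1 w hw hcs
    have h3 := hind2 (deriv w) (contDiff_deriv hw) hcs.deriv
    set S := ∑ r ∈ Finset.range (((m + 1) + 1) / 2 + 1),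
        ∫ y : ℝ, rhoW a c y * iteratedDeriv r w y ^ 2 with hS
    have hsingle : ∀ r : ℕ, r < ((m + 1) + 1) / 2 + 1 →
        (∫ y : ℝ, rhoW a c y * iteratedDeriv r w y ^ 2) ≤ S :=
      fun r hr => Finset.single_le_sum (fun i _ => hTnn i) (Finset.mem_range.2 hr)
    set J := ∫ y : ℝ, rhoW a c y * Wt ((m:ℝ) * c) y * w y ^ 2 with hJ
    set K := ∫ y : ℝ, rhoW a c y * Wt ((m:ℝ) * c - c) y * deriv w y ^ 2 with hK
    set K' := ∫ y : ℝ, rhoW a c y * Wt (((m - 1 : ℕ):ℝ) * c) y * deriv w y ^ 2 with hK'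
    have hKK' : K ≤ K' := by
      have hm1 : (m:ℝ) - 1 ≤ ((m - 1 : ℕ):ℝ) := by
        rcases Nat.eq_zero_or_pos m with h | h
        · subst h; norm_num
        · rw [Nat.cast_sub h]; norm_num
      have hexp : (m:ℝ) * c - c ≤ ((m - 1 : ℕ):ℝ) * c := by
        have := mul_le_mul_of_nonneg_right hm1 hc.le
        nlinarith [this]
      refine integral_mono ?_ ?_ ?_
      · exact integrable_cont_mul (hρ.mul (continuous_Wt _)) (hdwc.pow 2) (hcs_sq hcs.deriv)
      · exact integrable_cont_mul (hρ.mul (continuous_Wt _)) (hdwc.pow 2) (hcs_sq hcs.deriv)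
      · intro y
        exact mul_le_mul_of_nonneg_right
          (mul_le_mul_of_nonneg_left (Wt_mono hexp y) (rhoW_pos y).le) (sq_nonneg _)
    have hsum1 : ∑ r ∈ Finset.range M₁,
        (∫ y : ℝ, rhoW a c y * iteratedDeriv r w y ^ 2) ≤ (M₁ : ℝ) * S := by
      calc ∑ r ∈ Finset.range M₁, (∫ y : ℝ, rhoW a c y * iteratedDeriv r w y ^ 2)
          ≤ ∑ _r ∈ Finset.range M₁, S :=
            Finset.sum_le_sum fun r hr =>
              hsingle r (by have := Finset.mem_range.1 hr; omega)
        _ = (M₁ : ℝ) * S := by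
            rw [Finset.sum_const, Finset.card_range, nsmul_eq_mul]
    have hsum2 : ∑ r ∈ Finset.range M₂,
        (∫ y : ℝ, rhoW a c y * iteratedDeriv r (deriv w) y ^ 2) ≤ (M₂ : ℝ) * S := by
      calc ∑ r ∈ Finset.range M₂, (∫ y : ℝ, rhoW a c y * iteratedDeriv r (deriv w) y ^ 2)
          ≤ ∑ _r ∈ Finset.range M₂, S := by
            refine Finset.sum_le_sum fun r hr => ?_
            have hmem := Finset.mem_range.1 hr
            have heq : iteratedDeriv r (deriv w) = iteratedDeriv (r + 1) w :=
              iteratedDeriv_succ'.symm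
            calc (∫ y : ℝ, rhoW a c y * iteratedDeriv r (deriv w) y ^ 2)
                = ∫ y : ℝ, rhoW a c y * iteratedDeriv (r + 1) w y ^ 2 := by
                  simp only [heq]
              _ ≤ S := hsingle (r + 1) (by omega)
        _ = (M₂ : ℝ) * S := by
            rw [Finset.sum_const, Finset.card_range, nsmul_eq_mul]
    have hcast : (((m + 1 : ℕ)) : ℝ) * c = (m:ℝ) * c + c := by push_cast; ring
    have hJb : J ≤ C₁ * ((M₁:ℝ) * S) := h2.trans (mul_le_mul_of_nonneg_left hsum1 hC₁.le)
    have hKb : K ≤ C₂ * ((M₂:ℝ) * S) :=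
      (hKK'.trans h3).trans (mul_le_mul_of_nonneg_left hsum2 hC₂.le)
    calc (∫ y : ℝ, rhoW a c y * Wt (((m + 1 : ℕ) : ℝ) * c) y * w y ^ 2)
        = ∫ y : ℝ, rhoW a c y * Wt ((m:ℝ) * c + c) y * w y ^ 2 := by simp only [hcast]
      _ ≤ C₀ * (J + K) := h1
      _ ≤ C₀ * (C₁ * ((M₁:ℝ) * S) + C₂ * ((M₂:ℝ) * S)) :=
          mul_le_mul_of_nonneg_left (add_le_add hJb hKb) hC₀.le
      _ = (C₀ * (C₁ * (M₁:ℝ) + C₂ * (M₂:ℝ))) * S := by ring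

lemma hcs_iteratedDeriv {v : ℝ → ℝ} (hv : HasCompactSupport v) (n : ℕ) :
    HasCompactSupport (iteratedDeriv n v) := by
  induction n with
  | zero => simpa [iteratedDeriv_zero] using hv
  | succ n ih => rw [iteratedDeriv_succ]; exact ih.deriv

lemma contDiff_iteratedDeriv {v : ℝ → ℝ} (hv : ContDiff ℝ (⊤ : ℕ∞) v) (n : ℕ) :
    ContDiff ℝ (⊤ : ℕ∞) (iteratedDeriv n v) := by
  induction n with
  | zero => simpa [iteratedDeriv_zero] using hv
  | succ n ih => rw [iteratedDeriv_succ]; exact contDiff_deriv ih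

lemma Wt_two (y : ℝ) : Wt 2 y = 1 + y ^ 2 := by
  unfold Wt
  norm_num

set_option maxHeartbeats 1000000 in
/-- `B` is a bounded linear operator from `H^{2k+1}_ρ(ℝ)` to `L²_ρ(ℝ)`,
with weight `ρ(y) = exp(-a·y·|y|^(α-1))`, `α = (2k+1)/(2k)`, for all small `a > 0`. -/
theorem stmt4 (k : ℕ) (hk : 1 ≤ k) :
    ∃ a₀ > (0 : ℝ), ∀ a : ℝ, 0 < a → a < a₀ →
      ∃ C > (0 : ℝ), ∀ v : ℝ → ℝ, ContDiff ℝ (⊤ : ℕ∞) v → HasCompactSupport v →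
        (∫ y : ℝ,
            Real.exp (-a * y * |y| ^ ((2 * (k : ℝ) + 1) / (2 * (k : ℝ)) - 1)) *
              |(-1 : ℝ) ^ (k + 1) * iteratedDeriv (2 * k + 1) v y
                + (1 / (2 * (k : ℝ) + 1)) * y * deriv v y
                + (1 / (2 * (k : ℝ) + 1)) * v y| ^ 2)
        ≤ C * ∑ r ∈ Finset.range (2 * k + 2),
            ∫ y : ℝ,
              Real.exp (-a * y * |y| ^ ((2 * (k : ℝ) + 1) / (2 * (k : ℝ)) - 1)) *
                |iteratedDeriv r v y| ^ 2 := by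
  refine ⟨1, one_pos, ?_⟩
  intro a ha _ha1
  have hk0 : (0:ℝ) < (k:ℝ) := by exact_mod_cast hk
  set c : ℝ := (2 * (k : ℝ) + 1) / (2 * (k : ℝ)) - 1 with hcdef
  have hceq : c = 1 / (2 * (k:ℝ)) := by
    rw [hcdef]; field_simp; ring
  have hc : 0 < c := by rw [hceq]; positivity
  obtain ⟨C₄, hC₄, hchain⟩ := chain hc ha (4 * k)
  have h4kc : ((4 * k : ℕ):ℝ) * c = 2 := by
    rw [hceq]; push_cast; field_simp; ring
  set c₀ : ℝ := 1 / (2 * (k : ℝ) + 1) with hc₀def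
  have hc₀ : 0 < c₀ := by rw [hc₀def]; positivity
  refine ⟨3 + 3 * c₀ ^ 2 * C₄ * ((2 * k + 1 : ℕ) : ℝ) + 3 * c₀ ^ 2, by positivity, ?_⟩
  intro v hv hvs
  have hv' : ContDiff ℝ (⊤ : ℕ∞) v := hv.of_le (by simp)
  have hρ : Continuous (rhoW a c) := continuous_rhoW hc
  have hrho : ∀ y : ℝ, Real.exp (-a * y * |y| ^ c) = rhoW a c y := fun _ => rfl
  simp only [hrho, sq_abs]
  -- notation
  set D : ℝ → ℝ := iteratedDeriv (2 * k + 1) v with hD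
  have hDc : Continuous D := (contDiff_iteratedDeriv hv' _).continuous
  have hDcs : HasCompactSupport D := hcs_iteratedDeriv hvs _
  have hdvc : Continuous (deriv v) := cont_deriv hv'
  have hdvcs : HasCompactSupport (deriv v) := hvs.deriv
  have hvc : Continuous v := hv'.continuous
  -- the target sum
  set S := ∑ r ∈ Finset.range (2 * k + 2),
      ∫ y : ℝ, rhoW a c y * iteratedDeriv r v y ^ 2 with hS
  have hTnn : ∀ r : ℕ, 0 ≤ ∫ y : ℝ, rhoW a c y * iteratedDeriv r v y ^ 2 :=
    fun r => integral_nonneg fun y => mul_nonneg (rhoW_pos y).le (sq_nonneg _)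
  have hsingle : ∀ r : ℕ, r < 2 * k + 2 →
      (∫ y : ℝ, rhoW a c y * iteratedDeriv r v y ^ 2) ≤ S :=
    fun r hr => Finset.single_le_sum (fun i _ => hTnn i) (Finset.mem_range.2 hr)
  have hS0 : 0 ≤ S := Finset.sum_nonneg fun i _ => hTnn i
  -- integrability
  have i1 : Integrable (fun y : ℝ => rhoW a c y * D y ^ 2) :=
    integrable_cont_mul hρ (hDc.pow 2) (hcs_sq hDcs)
  have i2 : Integrable (fun y : ℝ =>
      rhoW a c y * Wt (((4 * k : ℕ):ℝ) * c) y * deriv v y ^ 2) :=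
    integrable_cont_mul (hρ.mul (continuous_Wt _)) (hdvc.pow 2) (hcs_sq hdvcs)
  have i3 : Integrable (fun y : ℝ => rhoW a c y * v y ^ 2) :=
    integrable_cont_mul hρ (hvc.pow 2) (hcs_sq hvs)
  -- the function X
  set X : ℝ → ℝ := fun y => (-1 : ℝ) ^ (k + 1) * D y + c₀ * y * deriv v y + c₀ * v y with hX
  have hXc : Continuous X := by
    rw [hX]; fun_prop
  have hXcs : HasCompactSupport X := by
    rw [hX]
    exact (HasCompactSupport.add
      (HasCompactSupport.add (hDcs.mul_left (f := fun _ => (-1:ℝ) ^ (k+1)))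
        (hdvcs.mul_left (f := fun y => c₀ * y)))
      (hvs.mul_left (f := fun _ => c₀)))
  have iX : Integrable (fun y : ℝ => rhoW a c y * X y ^ 2) :=
    integrable_cont_mul hρ (hXc.pow 2) (hcs_sq hXcs)
  -- pointwise bound
  have he : ((-1 : ℝ) ^ (k + 1)) ^ 2 = 1 := by
    rw [← pow_mul, mul_comm, pow_mul]
    norm_num
  have hpt : ∀ y : ℝ, rhoW a c y * X y ^ 2
      ≤ 3 * (rhoW a c y * D y ^ 2)
        + 3 * c₀ ^ 2 * (rhoW a c y * Wt (((4 * k : ℕ):ℝ) * c) y * deriv v y ^ 2)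
        + 3 * c₀ ^ 2 * (rhoW a c y * v y ^ 2) := by
    intro y
    have hW2 : Wt (((4 * k : ℕ):ℝ) * c) y = 1 + y ^ 2 := by rw [h4kc, Wt_two]
    rw [hW2]
    have hXy : X y = (-1 : ℝ) ^ (k + 1) * D y + c₀ * y * deriv v y + c₀ * v y := rfl
    have hsc : ((-1 : ℝ) ^ (k + 1) * D y + c₀ * y * deriv v y + c₀ * v y) ^ 2
        ≤ 3 * D y ^ 2 + 3 * c₀ ^ 2 * ((1 + y ^ 2) * deriv v y ^ 2) + 3 * c₀ ^ 2 * v y ^ 2 := by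
      nlinarith [sq_nonneg ((-1:ℝ) ^ (k+1) * D y - c₀ * y * deriv v y),
        sq_nonneg ((-1:ℝ) ^ (k+1) * D y - c₀ * v y),
        sq_nonneg (c₀ * y * deriv v y - c₀ * v y), he, sq_nonneg (c₀ * deriv v y)]
    rw [← hXy] at hsc
    have hm := mul_le_mul_of_nonneg_left hsc (rhoW_pos (a := a) (c := c) y).le
    nlinarith [hm]
  -- integrate the pointwise bound
  have hmono := integral_mono iX
    (((((i1.const_mul 3).add (i2.const_mul (3 * c₀ ^ 2))).add (i3.const_mul (3 * c₀ ^ 2))) :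
      Integrable fun y : ℝ => 3 * (rhoW a c y * D y ^ 2)
        + 3 * c₀ ^ 2 * (rhoW a c y * Wt (((4 * k : ℕ):ℝ) * c) y * deriv v y ^ 2)
        + 3 * c₀ ^ 2 * (rhoW a c y * v y ^ 2))) hpt
  have ia : Integrable (fun y : ℝ => 3 * (rhoW a c y * D y ^ 2)
      + 3 * c₀ ^ 2 * (rhoW a c y * Wt (((4 * k : ℕ):ℝ) * c) y * deriv v y ^ 2)) :=
    (i1.const_mul 3).add (i2.const_mul (3 * c₀ ^ 2))
  rw [integral_add ia (i3.const_mul (3 * c₀ ^ 2)),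
    integral_add (i1.const_mul 3) (i2.const_mul (3 * c₀ ^ 2)),
    integral_const_mul, integral_const_mul, integral_const_mul] at hmono
  -- bound the three integrals
  have hb1 : (∫ y : ℝ, rhoW a c y * D y ^ 2) ≤ S := by
    rw [hD]; exact hsingle (2 * k + 1) (by omega)
  have hb3 : (∫ y : ℝ, rhoW a c y * v y ^ 2) ≤ S := by
    have h0 : (∫ y : ℝ, rhoW a c y * v y ^ 2)
        = ∫ y : ℝ, rhoW a c y * iteratedDeriv 0 v y ^ 2 := by
      simp [iteratedDeriv_zero]
    rw [h0]; exact hsingle 0 (by omega)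
  have hb2 : (∫ y : ℝ, rhoW a c y * Wt (((4 * k : ℕ):ℝ) * c) y * deriv v y ^ 2)
      ≤ C₄ * (((2 * k + 1 : ℕ):ℝ) * S) := by
    have h2 := hchain (deriv v) (contDiff_deriv hv') hvs.deriv
    have hrange : (4 * k + 1) / 2 + 1 = 2 * k + 1 := by omega
    rw [hrange] at h2
    have hsum : ∑ r ∈ Finset.range (2 * k + 1),
        (∫ y : ℝ, rhoW a c y * iteratedDeriv r (deriv v) y ^ 2) ≤ ((2 * k + 1 : ℕ):ℝ) * S := by
      calc ∑ r ∈ Finset.range (2 * k + 1),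
          (∫ y : ℝ, rhoW a c y * iteratedDeriv r (deriv v) y ^ 2)
          ≤ ∑ _r ∈ Finset.range (2 * k + 1), S := by
            refine Finset.sum_le_sum fun r hr => ?_
            have hmem := Finset.mem_range.1 hr
            have heq : iteratedDeriv r (deriv v) = iteratedDeriv (r + 1) v :=
              iteratedDeriv_succ'.symm
            calc (∫ y : ℝ, rhoW a c y * iteratedDeriv r (deriv v) y ^ 2)
                = ∫ y : ℝ, rhoW a c y * iteratedDeriv (r + 1) v y ^ 2 := by
                  simp only [heq]
              _ ≤ S := hsingle (r + 1) (by omega)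
        _ = ((2 * k + 1 : ℕ):ℝ) * S := by
            rw [Finset.sum_const, Finset.card_range, nsmul_eq_mul]
    exact h2.trans (mul_le_mul_of_nonneg_left hsum hC₄.le)
  -- final assembly
  have hfinal : (∫ y : ℝ, rhoW a c y * X y ^ 2)
      ≤ (3 + 3 * c₀ ^ 2 * C₄ * ((2 * k + 1 : ℕ):ℝ) + 3 * c₀ ^ 2) * S := by
    have h31 : (0:ℝ) ≤ 3 * c₀ ^ 2 := by positivity
    calc (∫ y : ℝ, rhoW a c y * X y ^ 2)
        ≤ 3 * (∫ y : ℝ, rhoW a c y * D y ^ 2)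
          + 3 * c₀ ^ 2 * (∫ y : ℝ, rhoW a c y * Wt (((4 * k : ℕ):ℝ) * c) y * deriv v y ^ 2)
          + 3 * c₀ ^ 2 * (∫ y : ℝ, rhoW a c y * v y ^ 2) := hmono
      _ ≤ 3 * S + 3 * c₀ ^ 2 * (C₄ * (((2 * k + 1 : ℕ):ℝ) * S)) + 3 * c₀ ^ 2 * S := by
          have := mul_le_mul_of_nonneg_left hb1 (by norm_num : (0:ℝ) ≤ 3)
          have := mul_le_mul_of_nonneg_left hb2 h31
          have := mul_le_mul_of_nonneg_left hb3 h31
          linarith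
      _ = (3 + 3 * c₀ ^ 2 * C₄ * ((2 * k + 1 : ℕ):ℝ) + 3 * c₀ ^ 2) * S := by ring
  exact hfinal
end

section
/- Let k ≥ 1 and l ∈ ℕ. Define the generalized Hermite polynomial ψ*_l(y) = (1/√(l!))·∑_{j=0}^{⌊l/(2k+1)⌋} ((−1)^{k·j}/j!)·D_y^{(2k+1)j}(y^l), i.e. ψ*_l(y) = (1/√(l!))·∑_{j=0}^{⌊l/(2k+1)⌋} ((−1)^{k·j}/j!)·(l!/(l−(2k+1)j)!)·y^{l−(2k+1)j}. Then ψ*_l is an eigenfunction of the adjoint operator B* with eigenvalue λ_l = −l/(2k+1): for all y ∈ ℝ, (−1)^{k+1}·(ψ*_l)^{(2k+1)}(y) − (1/(2k+1))·y·(ψ*_l)′(y) = −(l/(2k+1))·ψ*_l(y). -/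
/-!
Write `ψ*_l = ∑_j c_j D^{mj}(y^l)` with `m = 2k+1` and `c_j = (-1)^{kj} / (j! √(l!))`. Since
`D^{mj}(y^l)` is homogeneous of degree `l - mj`, Euler's identity gives
`y D (D^{mj} y^l) = (l - mj) D^{mj} y^l`. On the other hand `D^m` sends the `j`-th term to the
`(j+1)`-th one, and `(-1)^{k+1} c_j = -(j+1) c_{j+1}`, so `(-1)^{k+1} m D^m ψ*_l` equals
`-∑_j m j c_j D^{mj}(y^l)`, which cancels the `-mj` part of the Euler term and leaves `-l ψ*_l`.
-/

open Polynomial Finset Nat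

theorem Polynomial.iteratedDeriv_eval {𝕜 : Type*} [NontriviallyNormedField 𝕜] (p : 𝕜[X])
    (n : ℕ) : iteratedDeriv n (fun x => p.eval x) = fun x => (derivative^[n] p).eval x := by
  induction n with
  | zero => rfl
  | succ n ih =>
    rw [iteratedDeriv_succ, ih, Function.iterate_succ_apply']
    funext x
    exact (derivative^[n] p).deriv

theorem Polynomial.eval_iterate_derivative_X_pow {K : Type*} [Field K] [CharZero K] {l n : ℕ}
    (h : n ≤ l) (z : K) :
    (derivative^[n] (X ^ l : K[X])).eval z = (l ! / (l - n)! : K) * z ^ (l - n) := by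
  have hfac : ((l - n)! * l.descFactorial n : K) = l ! := by
    exact_mod_cast factorial_mul_descFactorial h
  rw [iterate_derivative_X_pow_eq_C_mul, eval_mul, eval_C, eval_pow, eval_X, ← hfac,
    mul_div_cancel_left₀ _ (cast_ne_zero.mpr (factorial_ne_zero _))]

section CommRing

variable {R : Type*} [CommRing R]

theorem Polynomial.X_mul_derivative_iterate_derivative_X_pow (l n : ℕ) :
    X * derivative (derivative^[n] (X ^ l : R[X])) =
      C ((l : R) - n) * derivative^[n] (X ^ l) := by
  rw [iterate_derivative_X_pow_eq_C_mul, derivative_C_mul_X_pow]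
  rcases lt_trichotomy n l with hlt | rfl | hgt
  · obtain ⟨d, rfl⟩ := exists_add_of_le hlt.nat_succ_le
    simp only [show n + 1 + d - n = d + 1 by omega, add_tsub_cancel_right, map_mul, map_sub,
      map_natCast]
    push_cast
    ring
  · simp
  · simp [descFactorial_eq_zero_iff_lt.mpr hgt]

/-- With `m = 2k+1`, `c j = (-1)^(kj) / (j! √(l!))` and any `n` with `m n > l` this is `ψ*_l`:
the terms with `m j > l` are zero. -/
noncomputable def hermiteSum (c : ℕ → R) (m l n : ℕ) : R[X] :=
  ∑ j ∈ range n, C (c j) * derivative^[m * j] (X ^ l)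

/-- The recursion on `c` lets `D^m` shift each term onto the next one, while `X D` scales
`D^{mj}(X^l)` by `l - mj`; the two contributions telescope. -/
theorem hermiteSum_eigen {c : ℕ → R} {s : R} (hc : ∀ j, s * c j = (j + 1) * c (j + 1))
    (m l n : ℕ) :
    C (-s * m) * derivative^[m] (hermiteSum c m l n) - X * derivative (hermiteSum c m l n) =
      -C (l : R) * hermiteSum c m l n - C (m * n * c n) * derivative^[m * n] (X ^ l) := by
  induction n with
  | zero => simp [hermiteSum]
  | succ n ih =>
    have hshift : derivative^[m] (derivative^[m * n] (X ^ l : R[X])) =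
        derivative^[m * (n + 1)] (X ^ l) := by
      rw [← Function.iterate_add_apply, mul_add_one, add_comm]
    have hrec := congrArg C (hc n)
    have heuler := X_mul_derivative_iterate_derivative_X_pow (R := R) l (m * n)
    simp only [hermiteSum, sum_range_succ, iterate_map_add, derivative_add, derivative_C_mul,
      iterate_derivative_C_mul, hshift] at ih ⊢
    simp only [map_mul, map_add, map_sub, map_neg, map_natCast, map_one, Nat.cast_mul,
      Nat.cast_add, Nat.cast_one] at ih hrec heuler ⊢
    linear_combination ih - (m : R[X]) * derivative^[m * (n + 1)] (X ^ l) * hrec - C (c n) * heuler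

end CommRing

theorem stmt8_general (k l : ℕ) (ψ : ℝ → ℝ)
    (hψ : ∀ z : ℝ, ψ z = (1 / Real.sqrt (Nat.factorial l)) *
      ∑ j ∈ Finset.range (l / (2 * k + 1) + 1),
        ((-1 : ℝ) ^ (k * j) / (Nat.factorial j : ℝ)) *
          ((Nat.factorial l : ℝ) / (Nat.factorial (l - (2 * k + 1) * j) : ℝ)) *
          z ^ (l - (2 * k + 1) * j)) :
    ∀ y : ℝ,
      (-1 : ℝ) ^ (k + 1) * iteratedDeriv (2 * k + 1) ψ y
        - (1 / (2 * (k : ℝ) + 1)) * y * deriv ψ y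
      = -((l : ℝ) / (2 * (k : ℝ) + 1)) * ψ y := by
  intro y
  set m := 2 * k + 1 with hm
  set c : ℕ → ℝ := fun j => 1 / √(l ! : ℝ) * ((-1) ^ (k * j) / j !) with hc_def
  have hrec : ∀ j, (-1) ^ k * c j = (j + 1) * c (j + 1) := fun j => by
    simp only [hc_def, factorial_succ, cast_mul, cast_succ, mul_add_one, pow_add]
    field_simp
  have hψP : ψ = fun z => (hermiteSum c m l (l / m + 1)).eval z := by
    funext z
    rw [hψ, mul_sum]
    simp only [hermiteSum, eval_finsetSum, eval_mul, eval_C]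
    refine sum_congr rfl fun j hj => ?_
    rw [eval_iterate_derivative_X_pow]
    · ring
    · exact (Nat.mul_le_mul_left m (Nat.lt_succ_iff.mp (mem_range.mp hj))).trans (mul_div_le l m)
  have hvanish : derivative^[m * (l / m + 1)] (X ^ l : ℝ[X]) = 0 :=
    iterate_derivative_eq_zero ((natDegree_X_pow_le l).trans_lt (lt_mul_div_succ l (by omega)))
  have key := congrArg (eval y) (hermiteSum_eigen hrec m l (l / m + 1))
  simp only [hvanish, mul_zero, sub_zero, eval_sub, eval_mul, eval_C, eval_neg, eval_X] at key
  rw [hψP, iteratedDeriv_eval, Polynomial.deriv]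
  have hm' : (2 * (k : ℝ) + 1) = m := by simp [hm]
  have hm0 : (m : ℝ) ≠ 0 := by positivity
  rw [hm', pow_succ]
  field_simp
  linear_combination key

/-- The generalized Hermite polynomial
`ψ*_l(y) = (1/√(l!)) ∑_{j=0}^{⌊l/(2k+1)⌋} ((-1)^(k·j)/j!)·(l!/(l-(2k+1)j)!)·y^(l-(2k+1)j)`
is an eigenfunction of `B*` with eigenvalue `-l/(2k+1)`. -/
theorem stmt8 (k l : ℕ) (hk : 1 ≤ k) (ψ : ℝ → ℝ)
    (hψ : ∀ z : ℝ, ψ z = (1 / Real.sqrt (Nat.factorial l)) *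
      ∑ j ∈ Finset.range (l / (2 * k + 1) + 1),
        ((-1 : ℝ) ^ (k * j) / (Nat.factorial j : ℝ)) *
          ((Nat.factorial l : ℝ) / (Nat.factorial (l - (2 * k + 1) * j) : ℝ)) *
          z ^ (l - (2 * k + 1) * j)) :
    ∀ y : ℝ,
      (-1 : ℝ) ^ (k + 1) * iteratedDeriv (2 * k + 1) ψ y
        - (1 / (2 * (k : ℝ) + 1)) * y * deriv ψ y
      = -((l : ℝ) / (2 * (k : ℝ) + 1)) * ψ y :=
  stmt8_general k l ψ hψ
end

section
/- Let k ≥ 1 and p > 2k+2, and set d₁ = 1/(p−1) − 1/(2k+1). Let F : ℝ → ℝ be infinitely differentiable with BF = 0 on ℝ. Then for every l ∈ ℕ the function ψ_l = F^{(l)} satisfies B₁ψ_l = μ_l·ψ_l with μ_l = d₁ − l/(2k+1), and μ_l < 0 for every l ∈ ℕ; that is, every eigenvalue of the linearized operator B₁ = B + d₁·I is strictly negative when p exceeds the critical Fujita exponent p₀ = 2k+2. -/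
lemma itd_comp (f : ℝ → ℝ) (n m : ℕ) :
    iteratedDeriv n (iteratedDeriv m f) = iteratedDeriv (n + m) f := by
  induction n with
  | zero => simp
  | succ n ih =>
    rw [show n + 1 + m = n + m + 1 from by omega, iteratedDeriv_succ, iteratedDeriv_succ, ih]

/-- For `p > 2k+2` (above the critical Fujita exponent `p₀ = 2k+2`), every
`ψ_l = F^(l)` satisfies `B₁ ψ_l = μ_l ψ_l` with `μ_l = d₁ - l/(2k+1) < 0`, where
`B₁ = B + d₁ I` and `d₁ = 1/(p-1) - 1/(2k+1)`. -/
theorem stmt10 (k : ℕ) (hk : 1 ≤ k) (p : ℝ) (hp : 2 * (k : ℝ) + 2 < p)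
    (d₁ : ℝ) (hd : d₁ = 1 / (p - 1) - 1 / (2 * (k : ℝ) + 1))
    (F : ℝ → ℝ) (hF : ContDiff ℝ (⊤ : ℕ∞) F)
    (hODE : ∀ y : ℝ,
      (-1 : ℝ) ^ (k + 1) * iteratedDeriv (2 * k + 1) F y
        + (1 / (2 * (k : ℝ) + 1)) * y * deriv F y
        + (1 / (2 * (k : ℝ) + 1)) * F y = 0) :
    ∀ l : ℕ,
      (∀ y : ℝ,
        (-1 : ℝ) ^ (k + 1) * iteratedDeriv (2 * k + 1) (iteratedDeriv l F) y
          + (1 / (2 * (k : ℝ) + 1)) * y * deriv (iteratedDeriv l F) y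
          + (1 / (2 * (k : ℝ) + 1)) * iteratedDeriv l F y
          + d₁ * iteratedDeriv l F y
        = (d₁ - (l : ℝ) / (2 * (k : ℝ) + 1)) * iteratedDeriv l F y)
      ∧ d₁ - (l : ℝ) / (2 * (k : ℝ) + 1) < 0 := by
  set c : ℝ := 1 / (2 * (k : ℝ) + 1) with hc
  have hkpos : (0 : ℝ) < 2 * (k : ℝ) + 1 := by positivity
  have hdiff : ∀ n : ℕ, Differentiable ℝ (iteratedDeriv n F) := fun n =>
    hF.differentiable_iteratedDeriv n (by exact_mod_cast ENat.coe_lt_top n)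
  have hder : ∀ (n : ℕ) (y : ℝ),
      HasDerivAt (iteratedDeriv n F) (iteratedDeriv (n + 1) F y) y := by
    intro n y
    have := (hdiff n y).hasDerivAt
    rwa [show deriv (iteratedDeriv n F) y = iteratedDeriv (n + 1) F y by
      rw [iteratedDeriv_succ]] at this
  -- key induction
  have key : ∀ l : ℕ, ∀ y : ℝ,
      (-1 : ℝ) ^ (k + 1) * iteratedDeriv (2 * k + 1 + l) F y
        + c * y * iteratedDeriv (l + 1) F y
        + c * ((l : ℝ) + 1) * iteratedDeriv l F y = 0 := by
    intro l
    induction l with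
    | zero =>
      intro y
      have h := hODE y
      simp only [Nat.add_zero, Nat.zero_add, zero_add, iteratedDeriv_one, iteratedDeriv_zero,
        Nat.cast_zero, zero_add, mul_one]
      linarith
    | succ l ih =>
      intro y
      -- the function in ih is identically zero, so its derivative is zero
      have hfun : (fun y : ℝ => (-1 : ℝ) ^ (k + 1) * iteratedDeriv (2 * k + 1 + l) F y
          + c * y * iteratedDeriv (l + 1) F y
          + c * ((l : ℝ) + 1) * iteratedDeriv l F y) = fun _ => (0 : ℝ) :=
        funext ih
      have h1 := (((hder (2 * k + 1 + l) y).const_mul ((-1 : ℝ) ^ (k + 1))).add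
          (((hasDerivAt_id y).mul (hder (l + 1) y)).const_mul c)).add
          ((hder l y).const_mul (c * ((l : ℝ) + 1)))
      simp only [Pi.add_def, Pi.mul_def, id_eq, ← mul_assoc] at h1
      rw [hfun] at h1
      have h2 := h1.deriv
      rw [deriv_const] at h2
      have e1 : 2 * k + 1 + (l + 1) = 2 * k + 1 + l + 1 := by omega
      rw [e1]
      push_cast
      linear_combination -h2
  intro l
  have hneg : d₁ - (l : ℝ) / (2 * (k : ℝ) + 1) < 0 := by
    have hd1 : d₁ < 0 := by
      rw [hd]
      have : 1 / (p - 1) < 1 / (2 * (k : ℝ) + 1) :=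
        one_div_lt_one_div_of_lt hkpos (by linarith)
      linarith
    have : (0 : ℝ) ≤ (l : ℝ) / (2 * (k : ℝ) + 1) := by positivity
    linarith
  refine ⟨fun y => ?_, hneg⟩
  have hk2 := key l y
  rw [itd_comp, show deriv (iteratedDeriv l F) = iteratedDeriv (l + 1) F by
    rw [iteratedDeriv_succ]]
  rw [hc] at hk2 ⊢
  linear_combination hk2
end

section
/- Let k ≥ 1 and let h : ℝ → ℂ be Lebesgue measurable such that ∫_ℝ e^{c|ξ|}·|h(ξ)| dξ < ∞ for every c > 0. If ∫_ℝ ξ^n·e^{−i·|ξ|^{2k}·ξ}·h(ξ) dξ = 0 for every n ∈ ℕ, then h = 0 almost everywhere. (This is the core of the proof that the eigenfunction set {ψ_β = D^β F} is complete: the entire function M(z) = ∫ e^{−i|ξ|^{2k}ξ}·h(ξ)·e^{izξ} dξ has all derivatives vanishing at z = 0, hence M ≡ 0 and h = 0 a.e.) -/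
/-! The phase `exp (-i |ξ|^(2k) ξ)` has modulus one, so `G = exp (-i |ξ|^(2k) ξ) h` inherits the
exponential moments of `h`. They make `z ↦ ∫ exp (z ξ) G ξ` an entire function whose Taylor
coefficients at `0` are the moments `∫ ξ^n G ξ / n!`, all zero; so the Fourier transform of `G`
vanishes. Testing `G` against `𝓕 (𝓕⁻ Φ) = Φ` for smooth compactly supported `Φ` then gives
`G = 0`, hence `h = 0`, almost everywhere. -/

open MeasureTheory Real Complex FourierTransform
open scoped Nat

section ExponentialMoments

lemma norm_pow_div_factorial_mul (G : ℝ → ℂ) (z : ℂ) (n : ℕ) (ξ : ℝ) :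
    ‖z ^ n / n ! * ((ξ : ℂ) ^ n * G ξ)‖ = (‖z‖ * |ξ|) ^ n / n ! * ‖G ξ‖ := by
  simp only [norm_mul, norm_div, norm_pow, Complex.norm_real, Real.norm_eq_abs,
    Complex.norm_natCast, mul_pow]
  ring

variable {G : ℝ → ℂ} {z : ℂ} {c : ℝ}

lemma integrable_pow_div_factorial_mul (hGm : AEStronglyMeasurable G)
    (hG : Integrable fun ξ => Real.exp (‖z‖ * |ξ|) * ‖G ξ‖) (n : ℕ) :
    Integrable fun ξ : ℝ => z ^ n / n ! * ((ξ : ℂ) ^ n * G ξ) := by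
  refine hG.mono' (by fun_prop) (ae_of_all _ fun ξ => ?_)
  rw [norm_pow_div_factorial_mul]
  gcongr
  exact Real.pow_div_factorial_le_exp _ (by positivity) n

theorem hasSum_integral_exp_mul (hGm : AEStronglyMeasurable G) (hzc : ‖z‖ ≤ c)
    (hG : Integrable fun ξ => Real.exp (c * |ξ|) * ‖G ξ‖) :
    HasSum (fun n : ℕ => z ^ n / n ! * ∫ ξ : ℝ, (ξ : ℂ) ^ n * G ξ)
      (∫ ξ : ℝ, Complex.exp (z * ξ) * G ξ) := by
  have hGz : Integrable fun ξ => Real.exp (‖z‖ * |ξ|) * ‖G ξ‖ := by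
    refine hG.mono' (by fun_prop) (ae_of_all _ fun ξ => ?_)
    rw [Real.norm_of_nonneg (by positivity)]
    gcongr
  have hsum : Summable fun n : ℕ => ∫ ξ : ℝ, ‖z ^ n / n ! * ((ξ : ℂ) ^ n * G ξ)‖ := by
    refine summable_of_sum_range_le (c := ∫ ξ, Real.exp (‖z‖ * |ξ|) * ‖G ξ‖)
      (fun n => integral_nonneg fun ξ => norm_nonneg _) fun N => ?_
    rw [← integral_finsetSum _ fun n _ => (integrable_pow_div_factorial_mul hGm hGz n).norm]
    refine integral_mono (integrable_finsetSum _ fun n _ =>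
      (integrable_pow_div_factorial_mul hGm hGz n).norm) hGz fun ξ => ?_
    simp only [norm_pow_div_factorial_mul, ← Finset.sum_mul]
    gcongr
    exact Real.sum_le_exp_of_nonneg (by positivity) N
  have hexp : ∀ ξ : ℝ,
      Complex.exp (z * ξ) * G ξ = ∑' n : ℕ, z ^ n / n ! * ((ξ : ℂ) ^ n * G ξ) := by
    intro ξ
    rw [Complex.exp_eq_exp_ℂ,
      ← ((NormedSpace.expSeries_div_hasSum_exp (z * ξ)).mul_right (G ξ)).tsum_eq]
    congr 1 with n
    ring
  simp only [hexp, ← integral_const_mul]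
  exact hasSum_integral_of_summable_integral_norm (integrable_pow_div_factorial_mul hGm hGz) hsum

theorem integral_exp_mul_eq_zero_of_moments_eq_zero (hGm : AEStronglyMeasurable G)
    (hzc : ‖z‖ ≤ c) (hG : Integrable fun ξ => Real.exp (c * |ξ|) * ‖G ξ‖)
    (hmom : ∀ n : ℕ, ∫ ξ : ℝ, (ξ : ℂ) ^ n * G ξ = 0) :
    ∫ ξ : ℝ, Complex.exp (z * ξ) * G ξ = 0 :=
  (hasSum_integral_exp_mul hGm hzc hG).unique (by simp [hmom, hasSum_zero])

theorem fourier_eq_zero_of_moments_eq_zero (hGm : AEStronglyMeasurable G)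
    (hG : ∀ c : ℝ, 0 < c → Integrable fun ξ => Real.exp (c * |ξ|) * ‖G ξ‖)
    (hmom : ∀ n : ℕ, ∫ ξ : ℝ, (ξ : ℂ) ^ n * G ξ = 0) :
    𝓕 G = 0 := by
  funext w
  rw [Real.fourier_real_eq_integral_exp_smul, Pi.zero_apply,
    ← integral_exp_mul_eq_zero_of_moments_eq_zero (z := -2 * π * w * I) hGm
      (le_add_of_nonneg_right zero_le_one) (hG _ (by positivity)) hmom]
  congr 1 with v
  rw [smul_eq_mul]
  push_cast
  ring_nf

end ExponentialMoments

section FourierUniqueness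

variable {V F : Type*} [NormedAddCommGroup V] [InnerProductSpace ℝ V] [FiniteDimensional ℝ V]
  [MeasurableSpace V] [BorelSpace V] [NormedAddCommGroup F] [NormedSpace ℂ F] [CompleteSpace F]

theorem SchwartzMap.integral_fourier_smul_eq_of_integrable (f : SchwartzMap V ℂ) {g : V → F}
    (hg : Integrable g) : ∫ ξ, 𝓕 f ξ • g ξ = ∫ x, f x • 𝓕 g x := by
  simpa using! VectorFourier.integral_fourierIntegral_smul_eq_flip (L := innerₗ V)
    Real.continuous_fourierChar continuous_inner f.integrable hg

theorem MeasureTheory.Integrable.ae_eq_zero_of_fourier_eq_zero {f : V → F} (hf : Integrable f)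
    (h : 𝓕 f = 0) : f =ᵐ[volume] 0 := by
  refine ae_eq_zero_of_integral_contDiff_smul_eq_zero hf.locallyIntegrable fun g hg hgc => ?_
  let Φ : SchwartzMap V ℂ := (hgc.comp_left Complex.ofReal_zero).toSchwartzMap
    (Complex.ofRealCLM.contDiff.comp hg)
  calc ∫ x, g x • f x = ∫ x, 𝓕 (𝓕⁻ Φ) x • f x := by
        congr 1 with x
        rw [FourierTransform.fourier_fourierInv_eq]
        exact (Complex.coe_smul _ _).symm
    _ = ∫ x, 𝓕⁻ Φ x • 𝓕 f x := SchwartzMap.integral_fourier_smul_eq_of_integrable _ hf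
    _ = 0 := by simp [h]

end FourierUniqueness

theorem stmt18_general (k : ℕ) (h : ℝ → ℂ) (hmeas : Measurable h)
    (hexp : ∀ c : ℝ, 0 < c → Integrable (fun ξ : ℝ => Real.exp (c * |ξ|) * ‖h ξ‖))
    (hmom : ∀ n : ℕ,
      (∫ ξ : ℝ, (ξ : ℂ) ^ n *
        Complex.exp (-Complex.I * ((|ξ| ^ (2 * k) * ξ : ℝ) : ℂ)) * h ξ) = 0) :
    h =ᵐ[volume] 0 := by
  set G : ℝ → ℂ := fun ξ => Complex.exp (-Complex.I * ((|ξ| ^ (2 * k) * ξ : ℝ) : ℂ)) * h ξ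
  have hGnorm : ∀ ξ, ‖G ξ‖ = ‖h ξ‖ := fun ξ => by
    simp [G, Complex.norm_exp, -Complex.ofReal_pow]
  have hGexp : ∀ c : ℝ, 0 < c → Integrable fun ξ => Real.exp (c * |ξ|) * ‖G ξ‖ := by
    simpa only [hGnorm] using hexp
  have hGm : AEStronglyMeasurable G := by fun_prop
  have hGint : Integrable G := (hGexp 1 one_pos).mono' hGm (ae_of_all _ fun ξ => by
    rw [one_mul]
    exact le_mul_of_one_le_left (norm_nonneg _) (Real.one_le_exp (abs_nonneg ξ)))
  have hG0 : G =ᵐ[volume] 0 := hGint.ae_eq_zero_of_fourier_eq_zero <|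
    fourier_eq_zero_of_moments_eq_zero hGm hGexp fun n => by simpa only [G, mul_assoc] using hmom n
  filter_upwards [hG0] with ξ hξ
  simpa [G, Complex.exp_ne_zero] using hξ

/-- Completeness core: if a measurable `h : ℝ → ℂ` has all exponential
moments finite and `∫ ξ^n e^(-i|ξ|^(2k) ξ) h(ξ) dξ = 0` for every `n`, then `h = 0` a.e. -/
theorem stmt18 (k : ℕ) (hk : 1 ≤ k) (h : ℝ → ℂ) (hmeas : Measurable h)
    (hexp : ∀ c : ℝ, 0 < c → Integrable (fun ξ : ℝ => Real.exp (c * |ξ|) * ‖h ξ‖))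
    (hmom : ∀ n : ℕ,
      (∫ ξ : ℝ, (ξ : ℂ) ^ n *
        Complex.exp (-Complex.I * ((|ξ| ^ (2 * k) * ξ : ℝ) : ℂ)) * h ξ) = 0) :
    h =ᵐ[volume] 0 :=
  stmt18_general k h hmeas hexp hmom
end

section
/- Let k ≥ 1 be an integer and L > 0 a real number. Then the series ∑_{n=0}^∞ (1/√(n!))·√(Γ(2k·n/(2k+1) + 1))·L^{n/(2k)} converges, where Γ is the (real) Gamma function. (This series majorizes, uniformly for y in a compact interval [0,L], the eigenfunction expansion w(y,τ) = ∑_β e^{−βτ/(2k+1)}·M_β(u₀)·ψ_β(y) of the rescaled solution of the linear dispersion equation.) -/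
/-!
Since `log ∘ Γ` is convex, `Γ(c n + 1) ≤ Γ(1)^(1-c) Γ(n+1)^c = (n!)^c` for `c ∈ [0, 1]`.
With `c = 2k/(2k+1)` the `n`-th term is therefore at most `x^n / (n!)^((1-c)/2)` with
`x = |L|^(1/(2k))`, and `x^n / (n!)^p` is summable for every `p > 0` by the ratio test.
-/

open Real Filter Topology
open scoped Nat

theorem Real.Gamma_mul_add_one_le_factorial_rpow {c : ℝ} (hc0 : 0 ≤ c) (hc1 : c ≤ 1) (n : ℕ) :
    Gamma (c * n + 1) ≤ (n ! : ℝ) ^ c := by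
  have hconv := convexOn_log_Gamma.2 (Set.mem_Ioi.2 one_pos)
    (Set.mem_Ioi.2 (by positivity : (0 : ℝ) < n + 1)) (sub_nonneg.2 hc1) hc0 (by ring)
  simp only [smul_eq_mul, Function.comp_apply, Gamma_one, log_one, mul_zero, zero_add,
    Gamma_nat_eq_factorial, show (1 - c) * 1 + c * ((n : ℝ) + 1) = c * n + 1 by ring] at hconv
  have hfact : (0 : ℝ) < n ! := by positivity
  calc Gamma (c * n + 1) = exp (log (Gamma (c * n + 1))) :=
        (exp_log (Gamma_pos_of_pos (by positivity))).symm
    _ ≤ exp (c * log n !) := exp_le_exp.2 hconv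
    _ = (n ! : ℝ) ^ c := by rw [rpow_def_of_pos hfact, mul_comm]

theorem Real.summable_pow_div_factorial_rpow {p : ℝ} (hp : 0 < p) (x : ℝ) :
    Summable fun n => x ^ n / (n ! : ℝ) ^ p := by
  have hratio : ∀ n : ℕ, ‖x ^ (n + 1) / ((n + 1)! : ℝ) ^ p‖
      = (|x| / ((n : ℝ) + 1) ^ p) * ‖x ^ n / (n ! : ℝ) ^ p‖ := by
    intro n
    have hfact : (0 : ℝ) < n ! := by positivity
    simp only [norm_div, norm_pow, Real.norm_eq_abs, Nat.factorial_succ, Nat.cast_mul,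
      mul_rpow (Nat.cast_nonneg (n + 1)) hfact.le, abs_mul,
      abs_rpow_of_nonneg (Nat.cast_nonneg _), Nat.abs_cast]
    push_cast
    field_simp
    ring
  have hlim : Tendsto (fun n : ℕ => |x| / ((n : ℝ) + 1) ^ p) atTop (𝓝 0) :=
    tendsto_const_nhds.div_atTop ((tendsto_rpow_atTop hp).comp
      (tendsto_atTop_add_const_right atTop 1 tendsto_natCast_atTop_atTop))
  refine summable_of_ratio_norm_eventually_le (r := 1 / 2) (by norm_num) ?_
  filter_upwards [hlim.eventually (gt_mem_nhds (by norm_num : (0 : ℝ) < 1 / 2))] with n hn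
  rw [hratio]
  exact mul_le_mul_of_nonneg_right hn.le (norm_nonneg _)

theorem Real.summable_sqrt_Gamma_mul_add_one_div_sqrt_factorial_mul_pow {c : ℝ} (hc0 : 0 ≤ c)
    (hc1 : c < 1) (x : ℝ) :
    Summable fun n : ℕ => 1 / √(n ! : ℝ) * √(Gamma (c * n + 1)) * x ^ n := by
  refine (summable_pow_div_factorial_rpow (by linarith : 0 < (1 - c) / 2) |x|).of_norm_bounded
    fun n => ?_
  have hfact : (0 : ℝ) < n ! := by positivity
  have hsqrt : √(Gamma (c * n + 1)) ≤ (n ! : ℝ) ^ (c / 2) := by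
    calc √(Gamma (c * n + 1)) ≤ √((n ! : ℝ) ^ c) :=
          sqrt_le_sqrt (Gamma_mul_add_one_le_factorial_rpow hc0 hc1.le n)
      _ = (n ! : ℝ) ^ (c / 2) := by rw [sqrt_eq_rpow, ← rpow_mul hfact.le, mul_one_div]
  calc ‖1 / √(n ! : ℝ) * √(Gamma (c * n + 1)) * x ^ n‖
      = √(Gamma (c * n + 1)) / (n ! : ℝ) ^ (1 / 2 : ℝ) * |x| ^ n := by
        rw [norm_mul, norm_mul, norm_pow, norm_of_nonneg (by positivity),
          norm_of_nonneg (sqrt_nonneg _), Real.norm_eq_abs, sqrt_eq_rpow]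
        ring
    _ ≤ (n ! : ℝ) ^ (c / 2) / (n ! : ℝ) ^ (1 / 2 : ℝ) * |x| ^ n := by gcongr
    _ = |x| ^ n / (n ! : ℝ) ^ ((1 - c) / 2) := by
        rw [← rpow_sub hfact, div_eq_mul_inv _ ((n ! : ℝ) ^ _), ← rpow_neg hfact.le]
        ring_nf

theorem stmt19_general (k : ℕ) (L : ℝ) :
    Summable (fun n : ℕ =>
      (1 / Real.sqrt (Nat.factorial n)) *
        Real.sqrt (Real.Gamma (2 * (k : ℝ) * (n : ℝ) / (2 * (k : ℝ) + 1) + 1)) *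
        L ^ ((n : ℝ) / (2 * (k : ℝ)))) := by
  have hden : (0 : ℝ) < 2 * k + 1 := by positivity
  have hc0 : (0 : ℝ) ≤ 2 * k / (2 * k + 1) := by positivity
  have hc1 : (2 * k : ℝ) / (2 * k + 1) < 1 := (div_lt_one hden).2 (by linarith)
  refine (summable_sqrt_Gamma_mul_add_one_div_sqrt_factorial_mul_pow hc0 hc1
    (|L| ^ (1 / (2 * k : ℝ)))).of_norm_bounded fun n => ?_
  have harg : 2 * (k : ℝ) * n / (2 * k + 1) = 2 * k / (2 * k + 1) * n := by ring
  have hpow : (|L| ^ (1 / (2 * k : ℝ))) ^ n = |L| ^ ((n : ℝ) / (2 * k)) := by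
    rw [← rpow_natCast, ← rpow_mul (abs_nonneg L), one_div_mul_eq_div]
  rw [harg, hpow, norm_mul, norm_mul]
  gcongr
  · exact (norm_of_nonneg (by positivity)).le
  · exact (norm_of_nonneg (sqrt_nonneg _)).le
  · exact abs_rpow_le_abs_rpow L _

/-- For every integer `k ≥ 1` and real `L > 0`, the majorizing series
`∑ₙ (1/√(n!))·√(Γ(2kn/(2k+1) + 1))·L^(n/(2k))` converges. -/
theorem stmt19 (k : ℕ) (hk : 1 ≤ k) (L : ℝ) (hL : 0 < L) :
    Summable (fun n : ℕ =>
      (1 / Real.sqrt (Nat.factorial n)) *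
        Real.sqrt (Real.Gamma (2 * (k : ℝ) * (n : ℝ) / (2 * (k : ℝ) + 1) + 1)) *
        L ^ ((n : ℝ) / (2 * (k : ℝ)))) :=
  stmt19_general k L
end
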